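/- Let k be an algebraically closed field of characteristic zero and A, B ∈ k[[z]] of orders n ≥ 2 and m ≥ 2 respectively, and let d ≥ 2 divide both n and m. Then there exist W of order d and Ã of order n/d, B̃ of order m/d with A = Ã ∘ W and B = B̃ ∘ W, if and only if the intersection G_A ∩ G_B of the transition groups contains a subgroup of order d. -/

import Mathlib

open PowerSeries

/-- Composition (substitution) `comp A B = A ∘ B` of formal power series,
the standard coefficient formula, well-behaved when `B` has zero constant term. -/
noncomputable def comp {k : Type*} [Field k] (A B : PowerSeries k) : PowerSeries k :=
  PowerSeries.mk fun n =>
    ∑ i ∈ Finset.range (n + 1), (PowerSeries.coeff i A) * (PowerSeries.coeff n (B ^ i))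

/-- `iterComp φ j` is the `j`-fold compositional iterate `φ^{∘j}` (with `φ^{∘0} = z`). -/
noncomputable def iterComp {k : Type*} [Field k] (φ : PowerSeries k) : ℕ → PowerSeries k
  | 0 => PowerSeries.X
  | n + 1 => comp φ (iterComp φ n)

/-- Composition of a list of power series: `compList [A₁, …, A_r] = A₁ ∘ ⋯ ∘ A_r`. -/
noncomputable def compList {k : Type*} [Field k] : List (PowerSeries k) → PowerSeries k
  | [] => PowerSeries.X
  | a :: t => comp a (compList t)

/-!
A series `W` of order `d` is `S ^ d` for some `S` of order one (extract a `d`-th root of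
`W / X ^ d` with the binomial series), and `ψ = S⁻¹ ∘ (ζ • S)`, for `ζ` a primitive `d`-th root
of unity, fixes `W` and hence every `F ∘ W`; since `S ∘ ψ^{∘j} = ζ ^ j • S`, the compositional
order of `ψ` is exactly `d`.

Conversely, if `ψ` has compositional order `d`, its multiplier `λ = ψ'(0)` satisfies `λ ^ d = 1`
and the average `T = d⁻¹ • ∑_{j < d} λ⁻ʲ • ψ^{∘j}` linearises it: `T ∘ ψ = λ • T`. The same
identity shows that `λ` is a primitive `d`-th root of unity. A series `F` fixed by `ψ` becomes,
in the coordinate `T`, invariant under `z ↦ λ z`, so only the powers `z ^ (d j)` survive and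
`F = F̃ ∘ T ^ d`. Orders multiply under substitution, which gives the orders of `Ã` and `B̃`.
-/

section Composition

variable {k : Type*} [Field k]

theorem comp_eq_subst {A B : k⟦X⟧} (hB : constantCoeff B = 0) : comp A B = A.subst B := by
  ext n
  rw [comp, coeff_mk, coeff_subst' (HasSubst.of_constantCoeff_zero' hB),
    finsum_eq_sum_of_support_subset _ (s := Finset.range (n + 1))]
  · simp only [smul_eq_mul]
  refine Function.support_subset_iff'.mpr fun i hi => ?_
  simp only [Finset.coe_range, Set.mem_Iio, not_lt] at hi
  rw [coeff_of_lt_order n, smul_zero]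
  exact (ENat.natCast_lt_natCast.mpr hi).trans_le (le_order_pow_of_constantCoeff_eq_zero i hB)

theorem constantCoeff_subst_of_constantCoeff_eq_zero {F G : k⟦X⟧} (hG : constantCoeff G = 0) :
    constantCoeff (F.subst G) = constantCoeff F := by
  rw [← comp_eq_subst hG, ← coeff_zero_eq_constantCoeff_apply, comp, coeff_mk]
  simp

theorem coeff_one_subst {F G : k⟦X⟧} (hG : constantCoeff G = 0) :
    coeff 1 (F.subst G) = coeff 1 F * coeff 1 G := by
  simp [← comp_eq_subst hG, comp, Finset.sum_range_succ, coeff_one]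

theorem constantCoeff_iterComp {ψ : k⟦X⟧} (hψ : constantCoeff ψ = 0) :
    ∀ j, constantCoeff (iterComp ψ j) = 0
  | 0 => constantCoeff_X
  | j + 1 => by
    rw [iterComp, comp_eq_subst (constantCoeff_iterComp hψ j),
      constantCoeff_subst_of_constantCoeff_eq_zero (constantCoeff_iterComp hψ j), hψ]

theorem iterComp_succ {ψ : k⟦X⟧} (hψ : constantCoeff ψ = 0) (j : ℕ) :
    iterComp ψ (j + 1) = ψ.subst (iterComp ψ j) :=
  comp_eq_subst (constantCoeff_iterComp hψ j)

theorem iterComp_succ' {ψ : k⟦X⟧} (hψ : constantCoeff ψ = 0) (j : ℕ) :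
    iterComp ψ (j + 1) = (iterComp ψ j).subst ψ := by
  induction j with
  | zero => rw [iterComp_succ hψ, iterComp, subst_X (HasSubst.of_constantCoeff_zero' hψ), X_subst]
  | succ j ih =>
    rw [iterComp_succ hψ (j + 1), ih,
      ← subst_comp_subst_apply (HasSubst.of_constantCoeff_zero' (constantCoeff_iterComp hψ j))
        (HasSubst.of_constantCoeff_zero' hψ), ← iterComp_succ hψ, ih]

theorem coeff_one_iterComp {ψ : k⟦X⟧} (hψ : constantCoeff ψ = 0) (j : ℕ) :
    coeff 1 (iterComp ψ j) = coeff 1 ψ ^ j := by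
  induction j with
  | zero => simp [iterComp]
  | succ j ih =>
    rw [iterComp_succ' hψ, coeff_one_subst hψ, ih, pow_succ]

end Composition

theorem order_eq_one_iff {R : Type*} [Semiring R] {φ : R⟦X⟧} :
    φ.order = 1 ↔ constantCoeff φ = 0 ∧ coeff 1 φ ≠ 0 := by
  rw [← Nat.cast_one, order_eq_nat, and_comm]
  simp

theorem constantCoeff_eq_zero_of_order_eq {R : Type*} [Semiring R] {φ : R⟦X⟧} {d : ℕ}
    (hd : d ≠ 0) (hφ : φ.order = d) : constantCoeff φ = 0 :=
  order_ne_zero_iff_constCoeff_eq_zero.mp (by rw [hφ]; exact_mod_cast hd)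

section Order

variable {k : Type*} [Field k]

theorem order_subst {F W : k⟦X⟧} (hW : constantCoeff W = 0) :
    order (F.subst W) = F.order * W.order := by
  have hsW := HasSubst.of_constantCoeff_zero' hW
  rcases eq_or_ne F 0 with rfl | hF
  · rw [← coe_substAlgHom hsW, map_zero, order_zero,
      ENat.top_mul (order_ne_zero_iff_constCoeff_eq_zero.mpr hW)]
  have hu : constantCoeff ((divXPowOrder F).subst W) ≠ 0 := by
    rw [constantCoeff_subst_of_constantCoeff_eq_zero hW, Ne,
      constantCoeff_divXPowOrder_eq_zero_iff]
    exact hF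
  conv_lhs => rw [← X_pow_order_mul_divXPowOrder (f := F)]
  rw [subst_mul hsW, subst_pow hsW, subst_X hsW, order_mul, order_pow,
    not_not.mp (order_ne_zero_iff_constCoeff_eq_zero.not.mpr hu), add_zero, nsmul_eq_mul,
    coe_toNat_order hF]

theorem order_eq_div_of_eq_subst {F Ft W : k⟦X⟧} {n d : ℕ} (hd : d ≠ 0) (hW : W.order = d)
    (hF : F.order = n) (h : F = Ft.subst W) : Ft.order = (n / d : ℕ) := by
  rw [h, order_subst (constantCoeff_eq_zero_of_order_eq hd hW), hW] at hF
  obtain ⟨a, ha⟩ : ∃ a : ℕ, a = Ft.order := ENat.ne_top_iff_exists.mp fun htop => by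
    rw [htop, ENat.top_mul (by exact_mod_cast hd)] at hF
    exact ENat.top_ne_natCast n hF
  rw [← ha] at hF ⊢
  norm_cast at hF
  rw [← hF, Nat.mul_div_cancel _ (Nat.pos_of_ne_zero hd)]

end Order

section Conjugation

variable {k : Type*} [Field k]

theorem eq_X_of_subst_eq_self {S φ : k⟦X⟧} (hS0 : constantCoeff S = 0) (hS1 : coeff 1 S ≠ 0)
    (hφ : constantCoeff φ = 0) (h : S.subst φ = S) : φ = X := by
  have hφ' : HasSubst φ := HasSubst.of_constantCoeff_zero' hφ
  have hS'S := subst_substInvOfIsUnit_left S hS0 hS1.isUnit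
  calc φ = (X : k⟦X⟧).subst φ := (subst_X hφ').symm
    _ = (S.substInvOfIsUnit hS1.isUnit).subst (S.subst φ) := by
      rw [← hS'S, subst_comp_subst_apply (HasSubst.of_constantCoeff_zero' hS0) hφ']
    _ = X := by rw [h, hS'S]

def HasCompOrder (ψ : k⟦X⟧) (d : ℕ) : Prop :=
  iterComp ψ d = X ∧ ∀ j, 0 < j → j < d → iterComp ψ j ≠ X

theorem subst_iterComp_of_subst_eq_smul {S ψ : k⟦X⟧} {c : k} (hψ : constantCoeff ψ = 0)
    (h : S.subst ψ = c • S) (j : ℕ) : S.subst (iterComp ψ j) = c ^ j • S := by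
  induction j with
  | zero => rw [iterComp, X_subst, pow_zero, one_smul]
  | succ j ih =>
    have hj := HasSubst.of_constantCoeff_zero' (constantCoeff_iterComp hψ j)
    rw [iterComp_succ hψ, ← subst_comp_subst_apply (HasSubst.of_constantCoeff_zero' hψ) hj, h,
      subst_smul hj, ih, smul_smul, pow_succ']

theorem iterComp_eq_X_iff_of_subst_eq_smul {S ψ : k⟦X⟧} {c : k} (hS0 : constantCoeff S = 0)
    (hS1 : coeff 1 S ≠ 0) (hψ : constantCoeff ψ = 0) (h : S.subst ψ = c • S) {j : ℕ} :
    iterComp ψ j = X ↔ c ^ j = 1 := by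
  have hS : S ≠ 0 := fun h0 => hS1 (by rw [h0, map_zero])
  constructor
  · intro hj
    refine smul_left_injective k hS (?_ : c ^ j • S = (1 : k) • S)
    rw [← subst_iterComp_of_subst_eq_smul hψ h, hj, X_subst, one_smul]
  · intro hc
    refine eq_X_of_subst_eq_self hS0 hS1 (constantCoeff_iterComp hψ j) ?_
    rw [subst_iterComp_of_subst_eq_smul hψ h, hc, one_smul]

theorem hasCompOrder_iff_isPrimitiveRoot {S ψ : k⟦X⟧} {c : k} (hS0 : constantCoeff S = 0)
    (hS1 : coeff 1 S ≠ 0) (hψ : constantCoeff ψ = 0) (h : S.subst ψ = c • S) {d : ℕ}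
    (hd : 0 < d) : HasCompOrder ψ d ↔ IsPrimitiveRoot c d := by
  simp only [HasCompOrder, ne_eq, iterComp_eq_X_iff_of_subst_eq_smul hS0 hS1 hψ h]
  exact ⟨fun h => IsPrimitiveRoot.mk_of_lt c hd h.1 h.2,
    fun h => ⟨h.pow_eq_one, fun j hj hjd => h.pow_ne_one_of_pos_of_lt hj.ne' hjd⟩⟩

end Conjugation

section Roots

theorem binomialSeries_pow {R A : Type*} [CommRing R] [BinomialRing R] [Ring A] [Algebra R A]
    (r : R) (n : ℕ) : binomialSeries A r ^ n = binomialSeries A (n • r) := by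
  induction n with
  | zero => rw [pow_zero, zero_nsmul, binomialSeries_zero]
  | succ n ih => rw [pow_succ, ih, ← binomialSeries_add, succ_nsmul]

variable {k : Type*} [Field k] [IsAlgClosed k] [CharZero k]

theorem exists_pow_eq_of_constantCoeff_ne_zero {u : k⟦X⟧} (hu : constantCoeff u ≠ 0) {d : ℕ}
    (hd : d ≠ 0) : ∃ v : k⟦X⟧, v ^ d = u := by
  set c := constantCoeff u
  obtain ⟨a, ha⟩ := IsAlgClosed.exists_pow_nat_eq c (Nat.pos_of_ne_zero hd)
  have hsub : HasSubst (c⁻¹ • u - 1) :=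
    HasSubst.of_constantCoeff_zero' (by simp [c, inv_mul_cancel₀ hu])
  -- `(1 + X) ^ (1 / d)`, evaluated at `u / c - 1`, is a `d`-th root of `u / c`
  have h1 : binomialSeries k (1 : ℚ) = 1 + X := by
    simpa using binomialSeries_nat (R := ℚ) (A := k) 1
  refine ⟨a • (binomialSeries k (d⁻¹ : ℚ)).subst (c⁻¹ • u - 1), ?_⟩
  rw [smul_pow, ← subst_pow hsub, binomialSeries_pow, nsmul_eq_mul,
    mul_inv_cancel₀ (Nat.cast_ne_zero.mpr hd), h1,
    ← coe_substAlgHom hsub, map_add, map_one, coe_substAlgHom, subst_X hsub, ha,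
    add_sub_cancel, smul_smul, mul_inv_cancel₀ hu, one_smul]

theorem exists_pow_eq_of_order {W : k⟦X⟧} {d : ℕ} (hd : d ≠ 0) (hW : W.order = d) :
    ∃ S : k⟦X⟧, constantCoeff S = 0 ∧ coeff 1 S ≠ 0 ∧ S ^ d = W := by
  have hW0 : W ≠ 0 := by
    rintro rfl
    simp at hW
  obtain ⟨v, hv⟩ := exists_pow_eq_of_constantCoeff_ne_zero
    (constantCoeff_divXPowOrder_eq_zero_iff.not.mpr hW0) hd
  have hv0 : constantCoeff v ≠ 0 := by
    intro h0
    apply hW0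
    rw [← constantCoeff_divXPowOrder_eq_zero_iff, ← hv, map_pow, h0, zero_pow hd]
  refine ⟨X * v, by simp, by simpa [coeff_succ_X_mul] using hv0, ?_⟩
  calc (X * v) ^ d = X ^ W.order.toNat * divXPowOrder W := by
        rw [mul_pow, hv, hW, ENat.toNat_natCast]
    _ = W := X_pow_order_mul_divXPowOrder

end Roots

section Forward

variable {k : Type*} [Field k] [IsAlgClosed k] [CharZero k]

theorem exists_hasCompOrder_subst_eq_self {W : k⟦X⟧} {d : ℕ} (hd : 0 < d) (hW : W.order = d) :
    ∃ ψ : k⟦X⟧, ψ.order = 1 ∧ W.subst ψ = W ∧ HasCompOrder ψ d := by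
  obtain ⟨S, hS0, hS1, rfl⟩ := exists_pow_eq_of_order hd.ne' hW
  have : NeZero (d : k) := ⟨Nat.cast_ne_zero.mpr hd.ne'⟩
  obtain ⟨ζ, hζ⟩ := HasEnoughRootsOfUnity.exists_primitiveRoot k d
  have hζS0 : constantCoeff (ζ • S) = 0 := by simp [hS0]
  have hζS := HasSubst.of_constantCoeff_zero' hζS0
  set ψ := (S.substInvOfIsUnit hS1.isUnit).subst (ζ • S)
  have hψ0 : constantCoeff ψ = 0 := by
    rw [constantCoeff_subst_of_constantCoeff_eq_zero hζS0, constantCoeff_substInvOfIsUnit]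
  have hSψ : S.subst ψ = ζ • S := by
    rw [← subst_comp_subst_apply (HasSubst.substInvOfIsUnit _ _) hζS,
      subst_substInvOfIsUnit_right S hS0, subst_X hζS]
  refine ⟨ψ, order_eq_one_iff.mpr ⟨hψ0, ?_⟩, ?_,
    (hasCompOrder_iff_isPrimitiveRoot hS0 hS1 hψ0 hSψ hd).mpr hζ⟩
  · rw [coeff_one_subst hζS0, coeff_one_substInvOfIsUnit, map_smul, smul_eq_mul]
    exact mul_ne_zero (Units.ne_zero _) (mul_ne_zero (hζ.ne_zero hd.ne') hS1)
  · rw [subst_pow (HasSubst.of_constantCoeff_zero' hψ0), hSψ, smul_pow, hζ.pow_eq_one, one_smul]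

end Forward

section Backward

variable {k : Type*} [Field k]

theorem exists_subst_eq_smul_of_iterComp_eq_X {ψ : k⟦X⟧} (hψ : constantCoeff ψ = 0) {d : ℕ}
    (hd : (d : k) ≠ 0) (hψd : iterComp ψ d = X) :
    ∃ T : k⟦X⟧, constantCoeff T = 0 ∧ coeff 1 T = 1 ∧ T.subst ψ = coeff 1 ψ • T := by
  set c := coeff 1 ψ with hc_def
  have hcd : c ^ d = 1 := by rw [← coeff_one_iterComp hψ, hψd, coeff_X, if_pos rfl]
  have hc : c ≠ 0 := ne_zero_pow (fun h : d = 0 => hd (h ▸ Nat.cast_zero)) (hcd ▸ one_ne_zero)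
  have hψ' := HasSubst.of_constantCoeff_zero' hψ
  -- averaging `c⁻ʲ • ψ^{∘j}` over a period gives a series that `ψ` multiplies by `c`
  set g : ℕ → k⟦X⟧ := fun j => c⁻¹ ^ j • iterComp ψ j
  have hg : ∀ j, (g j).subst ψ = c • g (j + 1) := fun j => by
    rw [subst_smul hψ', ← iterComp_succ' hψ, smul_smul, pow_succ', ← mul_assoc,
      mul_inv_cancel₀ hc, one_mul]
  have hshift : ∑ j ∈ Finset.range d, g (j + 1) = ∑ j ∈ Finset.range d, g j := by
    have hgd : g d = g 0 := by simp only [g, hψd, inv_pow, hcd, inv_one, pow_zero, iterComp]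
    refine add_right_cancel (b := g 0) ?_
    rw [← Finset.sum_range_succ', Finset.sum_range_succ, hgd]
  refine ⟨(d : k)⁻¹ • ∑ j ∈ Finset.range d, g j, ?_, ?_, ?_⟩
  · simp [g, constantCoeff_iterComp hψ]
  · simp only [g, map_smul, map_sum, coeff_one_iterComp hψ, ← hc_def, smul_eq_mul, ← mul_pow,
      inv_mul_cancel₀ hc, one_pow, Finset.sum_const, Finset.card_range, nsmul_one]
    exact inv_mul_cancel₀ hd
  · rw [subst_smul hψ', ← coe_substAlgHom hψ', map_sum, coe_substAlgHom]
    simp only [hg, ← Finset.smul_sum, hshift]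
    exact smul_comm _ _ _

theorem exists_eq_subst_X_pow_of_rescale_eq {G : k⟦X⟧} {ζ : k} {d : ℕ} (hd : d ≠ 0)
    (hζ : IsPrimitiveRoot ζ d) (h : rescale ζ G = G) : ∃ F : k⟦X⟧, G = F.subst (X ^ d) := by
  refine ⟨mk fun i => coeff (d * i) G, ?_⟩
  ext n
  rw [coeff_subst_X_pow hd]
  split_ifs with hdn
  · simp [Nat.mul_div_cancel' hdn]
  · have hn : ζ ^ n * coeff n G = coeff n G := by rw [← coeff_rescale, h]
    exact (mul_left_eq_self₀.mp hn).resolve_left fun h1 => hdn ((hζ.pow_eq_one_iff_dvd n).mp h1)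

theorem exists_eq_subst_pow_of_subst_eq_self {ψ T F : k⟦X⟧} {ζ : k} {d : ℕ} (hd : d ≠ 0)
    (hT0 : constantCoeff T = 0) (hT1 : coeff 1 T ≠ 0) (hψ : constantCoeff ψ = 0)
    (hT : T.subst ψ = ζ • T) (hζ : IsPrimitiveRoot ζ d) (hF : F.subst ψ = F) :
    ∃ Ft : k⟦X⟧, F = Ft.subst (T ^ d) := by
  set T' := T.substInvOfIsUnit hT1.isUnit
  have hsT := HasSubst.of_constantCoeff_zero' hT0
  have hsT' : HasSubst T' := HasSubst.substInvOfIsUnit _ _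
  have hsψ := HasSubst.of_constantCoeff_zero' hψ
  have hsψT' : HasSubst (ψ.subst T') := HasSubst.of_constantCoeff_zero' (by
    rw [constantCoeff_subst_of_constantCoeff_eq_zero (constantCoeff_substInvOfIsUnit _ _), hψ])
  -- in the coordinate `T`, `ψ` becomes the rotation `z ↦ ζ z`
  have hrot : T'.subst (ζ • X) = ψ.subst T' := by
    have hX : ζ • X = T.subst (ψ.subst T') := by
      rw [← subst_comp_subst_apply hsψ hsT', hT, subst_smul hsT',
        subst_substInvOfIsUnit_right T hT0]
    rw [hX, ← subst_comp_subst_apply hsT hsψT', subst_substInvOfIsUnit_left T hT0,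
      subst_X hsψT']
  obtain ⟨Ft, hFt⟩ := exists_eq_subst_X_pow_of_rescale_eq hd hζ (G := F.subst T') (by
    rw [rescale_eq_subst, subst_comp_subst_apply hsT' (HasSubst.smul_X' ζ), hrot,
      ← subst_comp_subst_apply hsψ hsT', hF])
  refine ⟨Ft, ?_⟩
  calc F = subst T (F.subst T') := by
        rw [subst_comp_subst_apply hsT' hsT, subst_substInvOfIsUnit_left T hT0, X_subst]
    _ = Ft.subst (T ^ d) := by
        rw [hFt, subst_comp_subst_apply (HasSubst.X_pow hd) hsT, subst_pow hsT, subst_X hsT]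

theorem exists_subst_eq_of_hasCompOrder {ψ : k⟦X⟧} (hψ : constantCoeff ψ = 0) {d : ℕ} (hd : (d : k) ≠ 0) (hψd : HasCompOrder ψ d) :
    ∃ W : k⟦X⟧, W.order = d ∧ ∀ F : k⟦X⟧, F.subst ψ = F → ∃ Ft : k⟦X⟧, F = Ft.subst W := by
  have hd0 : d ≠ 0 := fun h => hd (h ▸ Nat.cast_zero)
  obtain ⟨T, hT0, hT1, hT⟩ := exists_subst_eq_smul_of_iterComp_eq_X hψ hd hψd.1
  have hT1' : coeff 1 T ≠ 0 := hT1 ▸ one_ne_zero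
  have hζ := (hasCompOrder_iff_isPrimitiveRoot hT0 hT1' hψ hT (Nat.pos_of_ne_zero hd0)).mp hψd
  refine ⟨T ^ d, ?_, fun F hF => exists_eq_subst_pow_of_subst_eq_self hd0 hT0 hT1' hψ hT hζ hF⟩
  rw [order_pow, order_eq_one_iff.mpr ⟨hT0, hT1'⟩, nsmul_one]

end Backward

theorem stmt13_general {k : Type*} [Field k] [IsAlgClosed k] [CharZero k]
    {n m d : ℕ} (hd : 2 ≤ d) (A B : PowerSeries k)
    (hA : A.order = (n : ℕ∞)) (hB : B.order = (m : ℕ∞)) :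
    (∃ W At Bt : PowerSeries k, W.order = (d : ℕ∞) ∧ At.order = ((n / d : ℕ) : ℕ∞) ∧
        Bt.order = ((m / d : ℕ) : ℕ∞) ∧ A = comp At W ∧ B = comp Bt W) ↔
      ∃ ψ : PowerSeries k, ψ.order = 1 ∧ comp A ψ = A ∧ comp B ψ = B ∧
        iterComp ψ d = X ∧ ∀ j : ℕ, 0 < j → j < d → iterComp ψ j ≠ X := by
  have hd0 : d ≠ 0 := by omega
  constructor
  · rintro ⟨W, At, Bt, hW, -, -, rfl, rfl⟩
    have hW0 := constantCoeff_eq_zero_of_order_eq hd0 hW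
    obtain ⟨ψ, hψ, hWψ, hψd⟩ := exists_hasCompOrder_subst_eq_self (Nat.pos_of_ne_zero hd0) hW
    have hψ0 := (order_eq_one_iff.mp hψ).1
    have hinv (Ft : k⟦X⟧) : comp (comp Ft W) ψ = comp Ft W := by
      rw [comp_eq_subst hψ0, comp_eq_subst hW0, subst_comp_subst_apply
        (HasSubst.of_constantCoeff_zero' hW0) (HasSubst.of_constantCoeff_zero' hψ0), hWψ]
    exact ⟨ψ, hψ, hinv At, hinv Bt, hψd⟩
  · rintro ⟨ψ, hψ, hAψ, hBψ, hψd⟩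
    have hψ0 := (order_eq_one_iff.mp hψ).1
    obtain ⟨W, hW, hfac⟩ := exists_subst_eq_of_hasCompOrder hψ0 (Nat.cast_ne_zero.mpr hd0) hψd
    have hW0 := constantCoeff_eq_zero_of_order_eq hd0 hW
    rw [comp_eq_subst hψ0] at hAψ hBψ
    obtain ⟨At, hAt⟩ := hfac A hAψ
    obtain ⟨Bt, hBt⟩ := hfac B hBψ
    exact ⟨W, At, Bt, hW, order_eq_div_of_eq_subst hd0 hW hA hAt,
      order_eq_div_of_eq_subst hd0 hW hB hBt, hAt.trans (comp_eq_subst hW0).symm,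
      hBt.trans (comp_eq_subst hW0).symm⟩

theorem stmt13 {k : Type*} [Field k] [IsAlgClosed k] [CharZero k]
    {n m d : ℕ} (hn : 2 ≤ n) (hm : 2 ≤ m) (hd : 2 ≤ d)
    (hdn : d ∣ n) (hdm : d ∣ m) (A B : PowerSeries k)
    (hA : A.order = (n : ℕ∞)) (hB : B.order = (m : ℕ∞)) :
    (∃ W At Bt : PowerSeries k, W.order = (d : ℕ∞) ∧ At.order = ((n / d : ℕ) : ℕ∞) ∧
        Bt.order = ((m / d : ℕ) : ℕ∞) ∧ A = comp At W ∧ B = comp Bt W) ↔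
      ∃ ψ : PowerSeries k, ψ.order = 1 ∧ comp A ψ = A ∧ comp B ψ = B ∧
        iterComp ψ d = X ∧ ∀ j : ℕ, 0 < j → j < d → iterComp ψ j ≠ X :=
  stmt13_general hd A B hA hB
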